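/- arXiv:1212.0027 — 6 statements merged into one kernel-verified Lean document; each statement's English description precedes it below -/
import Mathlib

section
/- Let (L, ≡_L) be an adjacency structure. Define a graph G whose vertices are the equivalence classes of ≡_L, with an edge {ũ:a, ṽ:b} whenever u.ab ∈ L and u.ab ≡_L v for some (equivalently, all) u ∈ ũ, v ∈ ṽ. Then no port of a vertex appears in two distinct edges: if {ũ:a, ṽ:b} and {ũ:a, w̃:c} are both edges, then b = c and ṽ = w̃. -/
theorem associated_graph_ports_unambiguous_general {P : Type*}
    (L : Set (List (P × P))) (E : List (P × P) → List (P × P) → Prop)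
    (h_symm : ∀ u v, E u v → E v u)
    (h_trans : ∀ u v w, E u v → E v w → E u w)
    (h_ii : ∀ u u' v : List (P × P), E u u' → u ∈ L → u' ∈ L → u ++ v ∈ L →
      u' ++ v ∈ L ∧ E (u' ++ v) (u ++ v))
    (h_adj : ∀ u u' : List (P × P), ∀ a b c : P, E u u' →
      u ++ [(a,b)] ∈ L → u' ++ [(a,c)] ∈ L → b = c) :
    ∀ (u u' v w : List (P × P)) (a b c : P),
      u ∈ L → u' ∈ L → v ∈ L → w ∈ L → E u u' →
      u ++ [(a,b)] ∈ L → u' ++ [(a,c)] ∈ L →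
      E (u ++ [(a,b)]) v → E (u' ++ [(a,c)]) w →
      b = c ∧ E v w := by
  intro u u' v w a b c hu hu' _ _ huu' hub hu'c hv hw
  obtain rfl : b = c := h_adj u u' a b c huu' hub hu'c
  have hext : E (u ++ [(a, b)]) (u' ++ [(a, b)]) :=
    h_symm _ _ (h_ii u u' [(a, b)] huu' hu hu' hub).2
  have hvu' : E v (u' ++ [(a, b)]) := h_trans _ _ _ (h_symm _ _ hv) hext
  exact ⟨rfl, h_trans _ _ _ hvu' hw⟩

/-- in the graph associated to an adjacency structure, no port of
a vertex appears in two distinct edges: if `{ũ:a, ṽ:b}` and `{ũ:a, w̃:c}` are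
both edges then `b = c` and `ṽ = w̃` (stated on representative words, where
a class is an `≡_L`-class of words of `L`). -/
theorem associated_graph_ports_unambiguous {P : Type*}
    (L : Set (List (P × P))) (E : List (P × P) → List (P × P) → Prop)
    (h_refl : ∀ u ∈ L, E u u)
    (h_symm : ∀ u v, E u v → E v u)
    (h_trans : ∀ u v w, E u v → E v w → E u w)
    (h_i : ∀ u v : List (P × P), u ++ v ∈ L → u ∈ L)
    (h_ii : ∀ u u' v : List (P × P), E u u' → u ∈ L → u' ∈ L → u ++ v ∈ L →
      u' ++ v ∈ L ∧ E (u' ++ v) (u ++ v))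
    (h_iii : ∀ (u : List (P × P)) (a b : P), u ++ [(a,b)] ∈ L →
      u ++ [(a,b),(b,a)] ∈ L ∧ E (u ++ [(a,b),(b,a)]) u)
    (h_adj : ∀ u u' : List (P × P), ∀ a b c : P, E u u' →
      u ++ [(a,b)] ∈ L → u' ++ [(a,c)] ∈ L → b = c) :
    ∀ (u u' v w : List (P × P)) (a b c : P),
      u ∈ L → u' ∈ L → v ∈ L → w ∈ L → E u u' →
      u ++ [(a,b)] ∈ L → u' ++ [(a,c)] ∈ L →
      E (u ++ [(a,b)]) v → E (u' ++ [(a,c)]) w →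
      b = c ∧ E v w :=
  associated_graph_ports_unambiguous_general L E h_symm h_trans h_ii h_adj
end

section
/- The associated graph of an adjacency structure is connected: every equivalence class ũ of ≡_L is connected by a path of edges to the class ε̃ of the empty word. -/
theorem List.reflTransGen_nil_of_prefixClosed {α : Type*} {L : Set (List α)}
    {r : List α → List α → Prop} (hL : ∀ u v, u ++ v ∈ L → u ∈ L)
    (hr : ∀ w x, w ++ [x] ∈ L → r w (w ++ [x])) :
    ∀ u ∈ L, Relation.ReflTransGen r [] u := by
  intro u
  induction u using List.reverseRecOn with
  | nil => exact fun _ => .refl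
  | append_singleton w x ih => exact fun hwx => .tail (ih (hL w [x] hwx)) (hr w x hwx)

theorem associated_graph_connected_general {P : Type*}
    (L : Set (List (P × P))) (E : List (P × P) → List (P × P) → Prop)
    (h_refl : ∀ u ∈ L, E u u)
    (h_i : ∀ u v : List (P × P), u ++ v ∈ L → u ∈ L) :
    ∀ u ∈ L, Relation.ReflTransGen
      (fun x y : List (P × P) => ∃ a b : P, x ++ [(a,b)] ∈ L ∧ E (x ++ [(a,b)]) y)
      [] u :=
  List.reflTransGen_nil_of_prefixClosed h_i fun _ ⟨a, b⟩ hwx => ⟨a, b, hwx, h_refl _ hwx⟩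

/-- the graph associated to an adjacency structure is connected:
every vertex (class of a word `u ∈ L`) is linked to the class of the empty
word by a path of edges; an edge step goes from `x` to any `y ≡_L x.ab`. -/
theorem associated_graph_connected {P : Type*}
    (L : Set (List (P × P))) (E : List (P × P) → List (P × P) → Prop)
    (h_refl : ∀ u ∈ L, E u u)
    (h_symm : ∀ u v, E u v → E v u)
    (h_trans : ∀ u v w, E u v → E v w → E u w)
    (h_i : ∀ u v : List (P × P), u ++ v ∈ L → u ∈ L)
    (h_ii : ∀ u u' v : List (P × P), E u u' → u ∈ L → u' ∈ L → u ++ v ∈ L →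
      u' ++ v ∈ L ∧ E (u' ++ v) (u ++ v))
    (h_iii : ∀ (u : List (P × P)) (a b : P), u ++ [(a,b)] ∈ L →
      u ++ [(a,b),(b,a)] ∈ L ∧ E (u ++ [(a,b),(b,a)]) u)
    (h_adj : ∀ u u' : List (P × P), ∀ a b c : P, E u u' →
      u ++ [(a,b)] ∈ L → u' ++ [(a,c)] ∈ L → b = c) :
    ∀ u ∈ L, Relation.ReflTransGen
      (fun x y : List (P × P) => ∃ a b : P, x ++ [(a,b)] ∈ L ∧ E (x ++ [(a,b)]) y)
      [] u :=
  associated_graph_connected_general L E h_refl h_i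
end

section
/- Let H be a group generated by a finite set h, let π = h ∪ h⁻¹, and embed each word w = a₁…aₙ over π into Π* = (π²)* via ā = (a, a⁻¹), defining L = {ā₁…āₙ : aᵢ ∈ π} and ū ≡_L v̄ iff u and v represent the same element of H. Then (L, ≡_L) is an adjacency structure. -/
/-!
Membership in `L` is a letterwise condition, so it passes to prefixes and suffixes and is preserved
by concatenation. A letter `(a, b)` has `b = a⁻¹`, which gives port-unambiguity; since
`π = h ∪ h⁻¹` is closed under inversion, `(b, a) = (a⁻¹, a)` is again a letter, and appending
`(a, a⁻¹) (a⁻¹, a)` multiplies the value of a word by `a a⁻¹ = 1`.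
-/

namespace CayleyLanguage

variable {G : Type*} [Group G] {S : Set G}

/-- The language `L = {ā₁ ⋯ āₙ : aᵢ ∈ S}`, where `ā = (a, a⁻¹)`. -/
def barWords (S : Set G) : Set (List (G × G)) :=
  {w | ∀ p ∈ w, p.1 ∈ S ∧ p.2 = p.1⁻¹}

theorem append_mem_barWords_iff {u v : List (G × G)} :
    u ++ v ∈ barWords S ↔ u ∈ barWords S ∧ v ∈ barWords S :=
  List.forall_mem_append

theorem append_singleton_mem_barWords_iff {u : List (G × G)} {a b : G} :
    u ++ [(a, b)] ∈ barWords S ↔ u ∈ barWords S ∧ a ∈ S ∧ b = a⁻¹ := by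
  rw [append_mem_barWords_iff]
  simp [barWords]

theorem append_reverse_letter_mem_barWords (hS : S⁻¹ = S) {u : List (G × G)} {a b : G}
    (h : u ++ [(a, b)] ∈ barWords S) : u ++ [(a, b), (b, a)] ∈ barWords S := by
  obtain ⟨hu, ha, rfl⟩ := append_singleton_mem_barWords_iff.1 h
  have ha' : a⁻¹ ∈ S := hS ▸ Set.inv_mem_inv.2 ha
  rw [append_mem_barWords_iff]
  refine ⟨hu, ?_⟩
  simp only [barWords, List.mem_cons, List.not_mem_nil, or_false, Set.mem_ofPred_eq]
  rintro p (rfl | rfl)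
  exacts [⟨ha, rfl⟩, ⟨ha', (inv_inv a).symm⟩]

theorem prod_map_fst_append_letter_reverse (u : List (G × G)) (a : G) :
    ((u ++ [(a, a⁻¹), (a⁻¹, a)]).map Prod.fst).prod = (u.map Prod.fst).prod := by
  simp

end CayleyLanguage

open CayleyLanguage in
/-- the language/equivalence associated to a group `H` with
generating set `h` (letters `ā = (a, a⁻¹)` for `a ∈ π = h ∪ h⁻¹`, two words
equivalent iff they evaluate to the same group element) is an adjacency
structure: prefix-closed, right-congruent, back-and-forth closed, and
port-unambiguous. -/
theorem cayley_graph_is_adjacency_structure {H : Type*} [Group H] (h : Set H) :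
    ∀ (π : Set H), π = h ∪ h⁻¹ →
    ∀ (L : Set (List (H × H))), L = {w | ∀ p ∈ w, p.1 ∈ π ∧ p.2 = p.1⁻¹} →
    ∀ (E : List (H × H) → List (H × H) → Prop),
      (∀ u v, E u v ↔ (u ∈ L ∧ v ∈ L ∧ (u.map Prod.fst).prod = (v.map Prod.fst).prod)) →
    (∀ u v : List (H × H), u ++ v ∈ L → u ∈ L) ∧
    (∀ u u' v : List (H × H), E u u' → u ++ v ∈ L →
      u' ++ v ∈ L ∧ E (u' ++ v) (u ++ v)) ∧
    (∀ (u : List (H × H)) (a b : H), u ++ [(a,b)] ∈ L →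
      u ++ [(a,b),(b,a)] ∈ L ∧ E (u ++ [(a,b),(b,a)]) u) ∧
    (∀ (u u' : List (H × H)) (a b c : H), E u u' →
      u ++ [(a,b)] ∈ L → u' ++ [(a,c)] ∈ L → b = c) := by
  rintro π rfl L hL E hE
  obtain rfl : L = barWords (h ∪ h⁻¹) := hL
  have hsymm : (h ∪ h⁻¹)⁻¹ = h ∪ h⁻¹ := by rw [Set.union_inv, inv_inv, Set.union_comm]
  refine ⟨fun u v huv ↦ (append_mem_barWords_iff.1 huv).1, ?_, ?_, ?_⟩
  · intro u u' v huu' huv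
    obtain ⟨-, hu', hprod⟩ := (hE u u').1 huu'
    have hu'v := append_mem_barWords_iff.2 ⟨hu', (append_mem_barWords_iff.1 huv).2⟩
    exact ⟨hu'v, (hE _ _).2 ⟨hu'v, huv, by simp [hprod]⟩⟩
  · intro u a b hab
    have hback := append_reverse_letter_mem_barWords hsymm hab
    obtain ⟨hu, -, rfl⟩ := append_singleton_mem_barWords_iff.1 hab
    exact ⟨hback, (hE _ _).2 ⟨hback, hu, prod_map_fst_append_letter_reverse u a⟩⟩
  · intro u u' a b c _ hb hc
    rw [(append_singleton_mem_barWords_iff.1 hb).2.2, (append_singleton_mem_barWords_iff.1 hc).2.2]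
end

section
/- For the path structure of a pointed graph modulo: the language of paths L(P̃) together with the path-equivalence relation ≡_{P̃} (two paths are equivalent iff they lead to the same vertex starting from the pointer) forms an adjacency structure. -/
/-!
A path word determines at most one endpoint because each step `u:a` has at most one
partner, so "lead to the same vertex" is compatible with appending a common suffix, and
two equivalent words read the port `a` at the same vertex, hence land on the same far
port. Symmetry of edges lets every step be immediately retraced.
-/

/-- A path in a pointed graph: `PathTo edge p w v` means that the word `w` of
port pairs can be traversed from the pointer `p`, ending at vertex `v`. -/
inductive PathTo {V P : Type*} (edge : V → P → V → P → Prop) (p : V) :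
    List (P × P) → V → Prop
  | nil : PathTo edge p [] p
  | snoc {w : List (P × P)} {u : V} {a b : P} {v : V} :
      PathTo edge p w u → edge u a v b → PathTo edge p (w ++ [(a,b)]) v

namespace PathTo

variable {V P : Type*} {edge : V → P → V → P → Prop} {p : V}

theorem eq_of_nil {v : V} (h : PathTo edge p [] v) : v = p := by
  generalize hw : ([] : List (P × P)) = w at h
  cases h with
  | nil => rfl
  | snoc _ _ => simp at hw

theorem snoc_iff {w : List (P × P)} {a b : P} {v : V} :
    PathTo edge p (w ++ [(a,b)]) v ↔ ∃ u, PathTo edge p w u ∧ edge u a v b := by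
  refine ⟨fun h => ?_, fun ⟨u, hu, he⟩ => hu.snoc he⟩
  generalize hw : w ++ [(a,b)] = w' at h
  cases h with
  | nil => simp at hw
  | @snoc w₂ u _ _ _ hu he =>
    obtain ⟨rfl, hab⟩ := List.append_inj' hw rfl
    simp only [List.cons.injEq, Prod.mk.injEq, and_true] at hab
    obtain ⟨rfl, rfl⟩ := hab
    exact ⟨u, hu, he⟩

theorem append_iff {u w : List (P × P)} {x : V} :
    PathTo edge p (u ++ w) x ↔ ∃ y, PathTo edge p u y ∧ PathTo edge y w x := by
  induction w using List.reverseRecOn generalizing x with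
  | nil =>
    simp only [List.append_nil]
    exact ⟨fun h => ⟨x, h, nil⟩, fun ⟨y, hy, hw⟩ => hw.eq_of_nil ▸ hy⟩
  | append_singleton w ab ih =>
    obtain ⟨a, b⟩ := ab
    simp only [← List.append_assoc, snoc_iff, ih]
    exact ⟨fun ⟨z, ⟨y, hy, hz⟩, he⟩ => ⟨y, hy, z, hz, he⟩,
      fun ⟨y, hy, z, hz, he⟩ => ⟨z, ⟨y, hy, hz⟩, he⟩⟩

theorem exists_of_append {u w : List (P × P)} {x : V} (h : PathTo edge p (u ++ w) x) :
    ∃ y, PathTo edge p u y :=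
  let ⟨y, hy, _⟩ := append_iff.mp h
  ⟨y, hy⟩

section Deterministic

variable (h_det : ∀ u a v b v' b', edge u a v b → edge u a v' b' → v = v')
include h_det

theorem unique {w : List (P × P)} {v v' : V} (h : PathTo edge p w v)
    (h' : PathTo edge p w v') : v = v' := by
  induction w using List.reverseRecOn generalizing v v' with
  | nil => rw [h.eq_of_nil, h'.eq_of_nil]
  | append_singleton w ab ih =>
    obtain ⟨u, hu, he⟩ := snoc_iff.mp h
    obtain ⟨u', hu', he'⟩ := snoc_iff.mp h'
    obtain rfl := ih hu hu'
    exact h_det _ _ _ _ _ _ he he'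

theorem append_of_same_end {u u' w : List (P × P)} {y x : V} (hu : PathTo edge p u y)
    (hu' : PathTo edge p u' y) (h : PathTo edge p (u ++ w) x) : PathTo edge p (u' ++ w) x := by
  obtain ⟨z, hz, hw⟩ := append_iff.mp h
  obtain rfl := unique h_det hu hz
  exact append_iff.mpr ⟨y, hu', hw⟩

end Deterministic

theorem snoc_retrace (h_symm : ∀ u a v b, edge u a v b → edge v b u a)
    {w : List (P × P)} {u v : V} {a b : P} (hu : PathTo edge p w u) (he : edge u a v b) :
    PathTo edge p (w ++ [(a,b),(b,a)]) u := by
  simpa using (hu.snoc he).snoc (h_symm _ _ _ _ he)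

end PathTo

open PathTo in
/-- the path structure of a pointed graph (language of paths with
path-equivalence "lead to the same vertex") is an adjacency structure:
prefix-closed, right-congruent, back-and-forth closed, port-unambiguous. -/
theorem path_structure_is_adjacency_structure {V P : Type*}
    (edge : V → P → V → P → Prop) (p : V)
    (h_symm : ∀ u a v b, edge u a v b → edge v b u a)
    (h_det : ∀ u a v b v' b', edge u a v b → edge u a v' b' → v = v' ∧ b = b') :
    ∀ (L : Set (List (P × P))), L = {w | ∃ v, PathTo edge p w v} →
    ∀ (E : List (P × P) → List (P × P) → Prop),
      (∀ w w', E w w' ↔ ∃ v, PathTo edge p w v ∧ PathTo edge p w' v) →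
    (∀ u v : List (P × P), u ++ v ∈ L → u ∈ L) ∧
    (∀ u u' v : List (P × P), E u u' → u ++ v ∈ L →
      u' ++ v ∈ L ∧ E (u' ++ v) (u ++ v)) ∧
    (∀ (u : List (P × P)) (a b : P), u ++ [(a,b)] ∈ L →
      u ++ [(a,b),(b,a)] ∈ L ∧ E (u ++ [(a,b),(b,a)]) u) ∧
    (∀ (u u' : List (P × P)) (a b c : P), E u u' →
      u ++ [(a,b)] ∈ L → u' ++ [(a,c)] ∈ L → b = c) := by
  rintro L rfl E hE
  have h_end := fun u a v b v' b' he he' => (h_det u a v b v' b' he he').1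
  refine ⟨fun u v ⟨x, hx⟩ => hx.exists_of_append, ?_, ?_, ?_⟩
  · rintro u u' v huu' ⟨x, hx⟩
    obtain ⟨y, hy, hy'⟩ := (hE u u').mp huu'
    have hx' := append_of_same_end h_end hy hy' hx
    exact ⟨⟨x, hx'⟩, (hE _ _).mpr ⟨x, hx', hx⟩⟩
  · rintro u a b ⟨x, hx⟩
    obtain ⟨y, hy, he⟩ := snoc_iff.mp hx
    have hback := hy.snoc_retrace h_symm he
    exact ⟨⟨y, hback⟩, (hE _ _).mpr ⟨y, hback, hy⟩⟩
  · rintro u u' a b c huu' ⟨x, hx⟩ ⟨x', hx'⟩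
    obtain ⟨y, hy, he⟩ := snoc_iff.mp hx
    obtain ⟨y', hy', he'⟩ := snoc_iff.mp hx'
    obtain ⟨z, hz, hz'⟩ := (hE u u').mp huu'
    obtain rfl := unique h_end hy hz
    obtain rfl := unique h_end hy' hz'
    exact (h_det _ _ _ _ _ _ he he').2
end

section
/- The map P̃ ↦ X(P̃) sending a pointed graph modulo to its path structure is injective: if two pointed graphs modulo have the same language of paths and the same path-equivalence relation, then they are isomorphic as pointed graphs. -/
lemma pathTo_nil_inv {V P : Type*} {e : V → P → V → P → Prop} {p v : V}
    (h : PathTo e p [] v) : v = p := by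
  generalize hw : ([] : List (P × P)) = w' at h
  cases h with
  | nil => rfl
  | snoc h1 h2 => simp at hw

lemma pathTo_snoc_inv {V P : Type*} {e : V → P → V → P → Prop} {p v : V}
    {w : List (P × P)} {a b : P} (h : PathTo e p (w ++ [(a,b)]) v) :
    ∃ u, PathTo e p w u ∧ e u a v b := by
  generalize hw : w ++ [(a,b)] = w' at h
  cases h with
  | nil => simp at hw
  | @snoc w₀ u a' b' _ h1 h2 =>
    have hlen : w.length = w₀.length := by
      have := congrArg List.length hw; simpa using this
    obtain ⟨hw1, hx⟩ := List.append_inj hw hlen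
    simp at hx
    obtain ⟨ha, hb⟩ := hx
    subst hw1; subst ha; subst hb
    exact ⟨u, h1, h2⟩

lemma pathTo_unique {V P : Type*} {e : V → P → V → P → Prop} {p : V}
    (hdet : ∀ u a v b v' b', e u a v b → e u a v' b' → v = v' ∧ b = b')
    {w : List (P × P)} {u v : V} (h1 : PathTo e p w u) (h2 : PathTo e p w v) :
    u = v := by
  induction h1 generalizing v with
  | nil => exact (pathTo_nil_inv h2).symm
  | snoc h1 he ih =>
    obtain ⟨u', hu', he'⟩ := pathTo_snoc_inv h2
    cases ih hu'
    exact (hdet _ _ _ _ _ _ he he').1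

/-- the map sending a pointed graph modulo to its path structure
is injective: two connected pointed graphs with the same language of paths and
the same path-equivalence are isomorphic as pointed graphs. -/
theorem pointed_graphs_with_same_path_structure_isomorphic {V₁ V₂ P : Type*}
    (e₁ : V₁ → P → V₁ → P → Prop) (p₁ : V₁)
    (e₂ : V₂ → P → V₂ → P → Prop) (p₂ : V₂)
    (h_symm₁ : ∀ u a v b, e₁ u a v b → e₁ v b u a)
    (h_det₁ : ∀ u a v b v' b', e₁ u a v b → e₁ u a v' b' → v = v' ∧ b = b')
    (h_conn₁ : ∀ v : V₁, ∃ w, PathTo e₁ p₁ w v)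
    (h_symm₂ : ∀ u a v b, e₂ u a v b → e₂ v b u a)
    (h_det₂ : ∀ u a v b v' b', e₂ u a v b → e₂ u a v' b' → v = v' ∧ b = b')
    (h_conn₂ : ∀ v : V₂, ∃ w, PathTo e₂ p₂ w v)
    (hL : ∀ w : List (P × P), (∃ v, PathTo e₁ p₁ w v) ↔ (∃ v, PathTo e₂ p₂ w v))
    (hE : ∀ w w' : List (P × P),
      (∃ v, PathTo e₁ p₁ w v ∧ PathTo e₁ p₁ w' v) ↔
      (∃ v, PathTo e₂ p₂ w v ∧ PathTo e₂ p₂ w' v)) :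
    ∃ φ : V₁ ≃ V₂, φ p₁ = p₂ ∧
      (∀ (u : V₁) (a : P) (v : V₁) (b : P), e₁ u a v b ↔ e₂ (φ u) a (φ v) b) := by
  classical
  -- choose a witness word for each vertex of V₁
  choose w₀ hw₀ using h_conn₁
  -- define f : V₁ → V₂ as the endpoint in V₂ of the chosen word
  have hf : ∀ v : V₁, ∃ x : V₂, PathTo e₂ p₂ (w₀ v) x :=
    fun v => (hL (w₀ v)).mp ⟨v, hw₀ v⟩
  choose f hfspec using hf
  -- key: for ANY word w witnessing u in V₁, any V₂-endpoint of w equals f u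
  have key : ∀ (w : List (P × P)) (u : V₁) (x : V₂),
      PathTo e₁ p₁ w u → PathTo e₂ p₂ w x → x = f u := by
    intro w u x h1 h2
    obtain ⟨z, hz1, hz2⟩ := (hE w (w₀ u)).mp ⟨u, h1, hw₀ u⟩
    have hx : x = z := pathTo_unique h_det₂ h2 hz1
    have hz : z = f u := pathTo_unique h_det₂ hz2 (hfspec u)
    exact hx.trans hz
  -- f is injective
  have hinj : Function.Injective f := by
    intro u v huv
    have : PathTo e₂ p₂ (w₀ v) (f u) := huv ▸ hfspec v
    obtain ⟨z, hz1, hz2⟩ := (hE (w₀ u) (w₀ v)).mpr ⟨f u, hfspec u, this⟩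
    have h1 : z = u := pathTo_unique h_det₁ hz1 (hw₀ u)
    have h2 : z = v := pathTo_unique h_det₁ hz2 (hw₀ v)
    exact h1 ▸ h2
  -- f is surjective
  have hsurj : Function.Surjective f := by
    intro y
    obtain ⟨w, hw⟩ := h_conn₂ y
    obtain ⟨x, hx⟩ := (hL w).mpr ⟨y, hw⟩
    exact ⟨x, (key w x y hx hw).symm⟩
  refine ⟨Equiv.ofBijective f ⟨hinj, hsurj⟩, ?_, ?_⟩
  · exact (key [] p₁ p₂ PathTo.nil PathTo.nil).symm
  · intro u a v b
    constructor
    · intro he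
      have hpath : PathTo e₁ p₁ (w₀ u ++ [(a,b)]) v := (hw₀ u).snoc he
      obtain ⟨y, hy⟩ := (hL _).mp ⟨v, hpath⟩
      obtain ⟨x, hx1, hx2⟩ := pathTo_snoc_inv hy
      have : x = f u := pathTo_unique h_det₂ hx1 (hfspec u)
      subst this
      have : y = f v := key _ v y hpath hy
      subst this
      exact hx2
    · intro he
      have hpath : PathTo e₂ p₂ (w₀ u ++ [(a,b)]) (f v) := (hfspec u).snoc he
      obtain ⟨y, hy⟩ := (hL _).mpr ⟨f v, hpath⟩
      obtain ⟨x, hx1, hx2⟩ := pathTo_snoc_inv hy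
      have hxu : x = u := pathTo_unique h_det₁ hx1 (hw₀ u)
      subst hxu
      have : f v = f y := key _ y (f v) hy hpath
      have : v = y := hinj this
      subst this
      exact hx2
end

section
/- For every adjacency structure X, the path structure of the associated pointed graph modulo of X equals X itself: X = X(P̃(X)). In particular, every adjacency structure is the path structure of some pointed graph modulo. -/
section PathsOfClasses

variable {P V : Type*} {L : Set (List (P × P))} {mk : L → V} {edge : V → P → V → P → Prop}

theorem pathTo_mk_of_mem (hε : [] ∈ L) (h_i : ∀ u v : List (P × P), u ++ v ∈ L → u ∈ L)
    (hstep : ∀ (u : L) (a b : P) (h : u.1 ++ [(a, b)] ∈ L), edge (mk u) a (mk ⟨_, h⟩) b)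
    {w : List (P × P)} (hw : w ∈ L) : PathTo edge (mk ⟨[], hε⟩) w (mk ⟨w, hw⟩) := by
  induction w using List.reverseRecOn with
  | nil => exact .nil
  | append_singleton u ab ih =>
    have hu : u ∈ L := h_i u [ab] hw
    exact .snoc (ih hu) (hstep ⟨u, hu⟩ ab.1 ab.2 hw)

theorem exists_mem_eq_mk_of_pathTo (hε : [] ∈ L) {E : List (P × P) → List (P × P) → Prop}
    (hmk : ∀ u v : L, mk u = mk v ↔ E u.1 v.1)
    (h_ii : ∀ u u' v : List (P × P), E u u' → u ∈ L → u' ∈ L → u ++ v ∈ L →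
      u' ++ v ∈ L ∧ E (u' ++ v) (u ++ v))
    (hedge : ∀ (x y : V) (a b : P), edge x a y b →
      ∃ u v : L, mk u = x ∧ mk v = y ∧ u.1 ++ [(a, b)] ∈ L ∧ E (u.1 ++ [(a, b)]) v.1)
    {w : List (P × P)} {x : V} (hp : PathTo edge (mk ⟨[], hε⟩) w x) :
    ∃ hw : w ∈ L, x = mk ⟨w, hw⟩ := by
  induction hp with
  | nil => exact ⟨hε, rfl⟩
  | @snoc w _ a b _ _ hlast ih =>
    obtain ⟨hw, rfl⟩ := ih
    obtain ⟨u, v, hu, rfl, hua, huav⟩ := hedge _ _ a b hlast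
    obtain ⟨hwa, hwa_ua⟩ := h_ii u.1 w [(a, b)] ((hmk u ⟨w, hw⟩).1 hu) u.2 hw hua
    refine ⟨hwa, ?_⟩
    calc mk v = mk ⟨_, hua⟩ := ((hmk _ v).2 huav).symm
      _ = mk ⟨_, hwa⟩ := ((hmk _ _).2 hwa_ua).symm

end PathsOfClasses

theorem adjacency_structure_is_a_path_structure_general {P : Type*}
    (L : Set (List (P × P))) (E : List (P × P) → List (P × P) → Prop)
    (h_i : ∀ u v : List (P × P), u ++ v ∈ L → u ∈ L)
    (h_ii : ∀ u u' v : List (P × P), E u u' → u ∈ L → u' ∈ L → u ++ v ∈ L →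
      u' ++ v ∈ L ∧ E (u' ++ v) (u ++ v))
    (hε : ([] : List (P × P)) ∈ L) :
    ∀ (Vtx : Type) (mk : L → Vtx), Function.Surjective mk →
      (∀ u v : L, mk u = mk v ↔ E u.1 v.1) →
    ∀ (edgeQ : Vtx → P → Vtx → P → Prop),
      (∀ (x y : Vtx) (a b : P), edgeQ x a y b ↔
        ∃ u v : L, mk u = x ∧ mk v = y ∧
          u.1 ++ [(a,b)] ∈ L ∧ E (u.1 ++ [(a,b)]) v.1) →
    ((∀ w : List (P × P), w ∈ L ↔ ∃ x : Vtx, PathTo edgeQ (mk ⟨[], hε⟩) w x) ∧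
     (∀ w w' : List (P × P), w ∈ L → w' ∈ L →
       (E w w' ↔ ∃ x : Vtx, PathTo edgeQ (mk ⟨[], hε⟩) w x ∧
         PathTo edgeQ (mk ⟨[], hε⟩) w' x))) := by
  intro Vtx mk _ hmk edgeQ hedge
  have path_of_mem {w} (hw : w ∈ L) := pathTo_mk_of_mem hε h_i
    (fun u a b h ↦ (hedge _ _ a b).2 ⟨u, ⟨_, h⟩, rfl, rfl, h, (hmk ⟨_, h⟩ _).1 rfl⟩) hw
  have mem_of_path {w x} (hp : PathTo edgeQ (mk ⟨[], hε⟩) w x) :=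
    exists_mem_eq_mk_of_pathTo hε hmk h_ii (fun x y a b ↦ (hedge x y a b).1) hp
  refine ⟨fun w ↦ ⟨fun hw ↦ ⟨_, path_of_mem hw⟩, fun ⟨_, hp⟩ ↦ (mem_of_path hp).1⟩,
    fun w w' hw hw' ↦ ⟨fun hE ↦ ?_, fun ⟨x, hp, hp'⟩ ↦ ?_⟩⟩
  · refine ⟨_, path_of_mem hw, ?_⟩
    rw [(hmk ⟨w, hw⟩ ⟨w', hw'⟩).2 hE]
    exact path_of_mem hw'
  · obtain ⟨_, rfl⟩ := mem_of_path hp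
    obtain ⟨_, hx⟩ := mem_of_path hp'
    exact (hmk _ _).1 hx

/-- every adjacency structure `X = (L, ≡_L)` equals the path
structure of its associated pointed graph modulo (whose vertices are the
`≡_L`-classes, pointed at the class of `ε`): the paths of the associated graph
are exactly the words of `L`, and two words of `L` are `≡_L`-equivalent iff
they are paths leading to the same vertex. -/
theorem adjacency_structure_is_a_path_structure {P : Type*}
    (L : Set (List (P × P))) (E : List (P × P) → List (P × P) → Prop)
    (h_refl : ∀ u ∈ L, E u u)
    (h_symm : ∀ u v, E u v → E v u)
    (h_trans : ∀ u v w, E u v → E v w → E u w)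
    (h_i : ∀ u v : List (P × P), u ++ v ∈ L → u ∈ L)
    (h_ii : ∀ u u' v : List (P × P), E u u' → u ∈ L → u' ∈ L → u ++ v ∈ L →
      u' ++ v ∈ L ∧ E (u' ++ v) (u ++ v))
    (h_iii : ∀ (u : List (P × P)) (a b : P), u ++ [(a,b)] ∈ L →
      u ++ [(a,b),(b,a)] ∈ L ∧ E (u ++ [(a,b),(b,a)]) u)
    (h_adj : ∀ u u' : List (P × P), ∀ a b c : P, E u u' →
      u ++ [(a,b)] ∈ L → u' ++ [(a,c)] ∈ L → b = c)
    (hε : ([] : List (P × P)) ∈ L) :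
    ∀ (Vtx : Type) (mk : L → Vtx), Function.Surjective mk →
      (∀ u v : L, mk u = mk v ↔ E u.1 v.1) →
    ∀ (edgeQ : Vtx → P → Vtx → P → Prop),
      (∀ (x y : Vtx) (a b : P), edgeQ x a y b ↔
        ∃ u v : L, mk u = x ∧ mk v = y ∧
          u.1 ++ [(a,b)] ∈ L ∧ E (u.1 ++ [(a,b)]) v.1) →
    ((∀ w : List (P × P), w ∈ L ↔ ∃ x : Vtx, PathTo edgeQ (mk ⟨[], hε⟩) w x) ∧
     (∀ w w' : List (P × P), w ∈ L → w' ∈ L →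
       (E w w' ↔ ∃ x : Vtx, PathTo edgeQ (mk ⟨[], hε⟩) w x ∧
         PathTo edgeQ (mk ⟨[], hε⟩) w' x))) :=
  adjacency_structure_is_a_path_structure_general L E h_i h_ii hε
end
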